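/- Let S ∈ {FT, T̄} and A, B ∈ M_n(S). The following are equivalent: (i) there is a surjective linear morphism from the column space C_S(B) onto C_S(A); (ii) there is an injective linear morphism from the row space R_S(A) into R_S(B); (iii) there exists C ∈ M_n(S) with C R-related to A (C_S(C) = C_S(A)) and C ≤_L B (R_S(C) ⊆ R_S(B)). -/

import Mathlib

section TropDefs

variable {S : Type*} [SemilatticeSup S] [Add S] {n : ℕ} [NeZero n]

/-- The (tropical) row space of `A`: all tropical linear combinations
`max_i (λ_i + A_i)` of the rows of `A`. -/
def tropRowSpan (A : Matrix (Fin n) (Fin n) S) : Set (Fin n → S) :=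
  {v | ∃ lam : Fin n → S,
    v = fun j => Finset.univ.sup' Finset.univ_nonempty fun i => lam i + A i j}

/-- The (tropical) column space of `A`, as a set of vectors in `S^n`. -/
def tropColSpan (A : Matrix (Fin n) (Fin n) S) : Set (Fin n → S) :=
  tropRowSpan A.transpose

/-- There is a surjective linear morphism (preserving `⊔` and tropical scaling)
from `X` onto `Y`. -/
def SurjLin (X Y : Set (Fin n → S)) : Prop :=
  ∃ f : (Fin n → S) → (Fin n → S),
    (∀ x ∈ X, ∀ y ∈ X, f (x ⊔ y) = f x ⊔ f y) ∧
    (∀ c : S, ∀ x ∈ X, (f fun j => c + x j) = fun j => c + f x j) ∧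
    (∀ x ∈ X, f x ∈ Y) ∧ ∀ y ∈ Y, ∃ x ∈ X, f x = y

/-- There is an injective linear morphism (preserving `⊔` and tropical scaling)
from `X` into `Y`. -/
def InjLin (X Y : Set (Fin n → S)) : Prop :=
  ∃ f : (Fin n → S) → (Fin n → S),
    (∀ x ∈ X, ∀ y ∈ X, f (x ⊔ y) = f x ⊔ f y) ∧
    (∀ c : S, ∀ x ∈ X, (f fun j => c + x j) = fun j => c + f x j) ∧
    (∀ x ∈ X, f x ∈ Y) ∧ Set.InjOn f X

/-- The statement of the theorem, for a given tropical semiring `S`: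
for all `A, B ∈ M_n(S)` the following are equivalent:
(i) `C_S(B)` surjects linearly onto `C_S(A)`;
(ii) `R_S(A)` embeds linearly into `R_S(B)`;
(iii) there is `C ∈ M_n(S)` with `C R A` (equal column spaces) and `C ≤_L B`
(row space contained in that of `B`). -/
def SurjEmbedTFAE (S : Type*) [SemilatticeSup S] [Add S] (n : ℕ) [NeZero n] : Prop :=
  ∀ A B : Matrix (Fin n) (Fin n) S,
    (SurjLin (tropColSpan B) (tropColSpan A) ↔ InjLin (tropRowSpan A) (tropRowSpan B)) ∧
    (SurjLin (tropColSpan B) (tropColSpan A) ↔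
      ∃ C : Matrix (Fin n) (Fin n) S,
        tropColSpan C = tropColSpan A ∧ tropRowSpan C ⊆ tropRowSpan B)

end TropDefs

/-!
Both semirings are residuated: `z + b ≤ a ↔ z ≤ res a b`, with `res a b = a - b` on `ℝ` and
`res a b = -(b - a)` on `EReal`. Hence every row of `M` lies in `R(M)`, so a linear morphism on
`R(M)` is right multiplication by the matrix whose rows are the images of the rows of `M`; and a
duality holds: `c ∈ R(B)` as soon as `x ↦ ⟪x, c⟫` is monotone for the preorder `B x ≤ B y`.

A surjection `C(B) → C(A)` is thus `B x ↦ F x` with `C(F) = C(A)`, and it is monotone, so the rows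
of `F` lie in `R(B)` by duality. An injection `R(A) → R(B)` is `x A ↦ x G` with `R(G) ⊆ R(B)`; it
preserves and reflects order, so duality for the transposes gives `C(G) = C(A)`. Conversely,
`R(C) ⊆ R(B)` means `C = D B`, and `x ↦ D x` maps `C(B)` onto `C(C)`; `C(C) = C(A)` means
`C = A P` and `A = C Q`, and `x ↦ x P` embeds `R(A)` into `R(C)`.
-/

open Finset Matrix Set

section SupPreserving

variable {α β ι : Type*} [SemilatticeSup α] [SemilatticeSup β] {X : Set α} {f : α → β}

lemma monotoneOn_of_map_sup (hf : ∀ x ∈ X, ∀ y ∈ X, f (x ⊔ y) = f x ⊔ f y) :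
    MonotoneOn f X := fun x hx y hy hxy =>
  calc f x ≤ f x ⊔ f y := le_sup_left
    _ = f y := by rw [← hf x hx y hy, sup_eq_right.2 hxy]

lemma le_of_map_sup_le (hX : SupClosed X) (hf : ∀ x ∈ X, ∀ y ∈ X, f (x ⊔ y) = f x ⊔ f y)
    (hinj : InjOn f X) {x y : α} (hx : x ∈ X) (hy : y ∈ X) (hxy : f x ≤ f y) : x ≤ y := by
  have : f (x ⊔ y) = f y := by rw [hf x hx y hy, sup_eq_right.2 hxy]
  exact sup_eq_right.1 (hinj (hX hx hy) hy this)

lemma map_finset_sup'_of_map_sup (hX : SupClosed X)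
    (hf : ∀ x ∈ X, ∀ y ∈ X, f (x ⊔ y) = f x ⊔ f y) {s : Finset ι} (hs : s.Nonempty)
    {g : ι → α} (hg : ∀ i ∈ s, g i ∈ X) : f (s.sup' hs g) = s.sup' hs (f ∘ g) := by
  induction hs using Finset.Nonempty.cons_induction with
  | singleton i => simp
  | cons i s his hs ih =>
    simp only [sup'_cons hs]
    rw [hf _ (hg i (mem_cons_self i s)) _ (hX.finsetSup'_mem hs fun j hj => hg j (by simp [hj])),
      ih fun j hj => hg j (by simp [hj]), Function.comp_apply]

end SupPreserving

section Tropical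

variable {S : Type*} [LinearOrder S] [AddCommMonoid S] {n : ℕ} [NeZero n]

def tropDot (v w : Fin n → S) : S :=
  univ.sup' univ_nonempty fun i => v i + w i

def tropVecMul (v : Fin n → S) (M : Matrix (Fin n) (Fin n) S) : Fin n → S :=
  fun j => univ.sup' univ_nonempty fun i => v i + M i j

def tropMul (M N : Matrix (Fin n) (Fin n) S) : Matrix (Fin n) (Fin n) S :=
  fun i => tropVecMul (M i) N

lemma transpose_tropMul (M N : Matrix (Fin n) (Fin n) S) :
    (tropMul M N)ᵀ = tropMul Nᵀ Mᵀ := by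
  ext i k
  simp only [transpose_apply, tropMul, tropVecMul, add_comm]

variable [IsOrderedAddMonoid S]

lemma add_finset_sup' {ι : Type*} {s : Finset ι} (hs : s.Nonempty) (a : S) (f : ι → S) :
    a + s.sup' hs f = s.sup' hs fun i => a + f i :=
  apply_sup'_eq_sup'_comp hs (a + ·) fun x y => (max_add_add_left a x y).symm

lemma finset_sup'_add {ι : Type*} {s : Finset ι} (hs : s.Nonempty) (a : S) (f : ι → S) :
    s.sup' hs f + a = s.sup' hs fun i => f i + a :=
  apply_sup'_eq_sup'_comp hs (· + a) fun x y => (max_add_add_right x y a).symm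

lemma tropVecMul_sup (v w : Fin n → S) (M : Matrix (Fin n) (Fin n) S) :
    tropVecMul (v ⊔ w) M = tropVecMul v M ⊔ tropVecMul w M := by
  funext j
  refine eq_of_forall_ge_iff fun a => ?_
  simp only [tropVecMul, Pi.sup_apply, sup_le_iff, sup'_le_iff, ← max_add_add_right,
    forall_and]

lemma tropVecMul_const_add (c : S) (v : Fin n → S) (M : Matrix (Fin n) (Fin n) S) :
    tropVecMul (fun i => c + v i) M = fun j => c + tropVecMul v M j := by
  funext j
  simp only [tropVecMul, add_finset_sup', add_assoc]

lemma tropVecMul_tropVecMul (v : Fin n → S) (M N : Matrix (Fin n) (Fin n) S) :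
    tropVecMul (tropVecMul v M) N = tropVecMul v (tropMul M N) := by
  funext k
  simp only [tropVecMul, tropMul, finset_sup'_add, add_finset_sup', add_assoc]
  exact Finset.sup'_comm _ _ _

lemma tropMul_assoc (L M N : Matrix (Fin n) (Fin n) S) :
    tropMul (tropMul L M) N = tropMul L (tropMul M N) :=
  funext fun i => tropVecMul_tropVecMul (L i) M N

end Tropical

section RowSpan

variable {S : Type*} [LinearOrder S] [AddCommMonoid S] {n : ℕ} [NeZero n]

lemma tropRowSpan_eq_range (M : Matrix (Fin n) (Fin n) S) :
    tropRowSpan M = Set.range fun v => tropVecMul v M :=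
  ext fun _ => exists_congr fun _ => eq_comm

lemma tropVecMul_mem_tropRowSpan (v : Fin n → S) (M : Matrix (Fin n) (Fin n) S) :
    tropVecMul v M ∈ tropRowSpan M :=
  ⟨v, rfl⟩

lemma exists_eq_tropMul_of_forall_mem {B C : Matrix (Fin n) (Fin n) S}
    (h : ∀ i, C i ∈ tropRowSpan B) : ∃ D, C = tropMul D B := by
  choose D hD using h
  exact ⟨D, funext hD⟩

variable [IsOrderedAddMonoid S]

lemma tropVecMul_mono (M : Matrix (Fin n) (Fin n) S) : Monotone fun v => tropVecMul v M :=
  fun _ _ hvw _ => sup'_mono_fun fun i _ => add_le_add_left (hvw i) _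

lemma supClosed_tropRowSpan (M : Matrix (Fin n) (Fin n) S) : SupClosed (tropRowSpan M) := by
  rintro _ ⟨v, rfl⟩ _ ⟨w, rfl⟩
  exact ⟨v ⊔ w, (tropVecMul_sup v w M).symm⟩

lemma const_add_mem_tropRowSpan {M : Matrix (Fin n) (Fin n) S} {x : Fin n → S}
    (hx : x ∈ tropRowSpan M) (c : S) : (fun j => c + x j) ∈ tropRowSpan M := by
  obtain ⟨v, rfl⟩ := hx
  exact ⟨fun i => c + v i, (tropVecMul_const_add c v M).symm⟩

lemma image_tropVecMul_tropRowSpan (M N : Matrix (Fin n) (Fin n) S) :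
    (fun v => tropVecMul v N) '' tropRowSpan M = tropRowSpan (tropMul M N) := by
  rw [tropRowSpan_eq_range, tropRowSpan_eq_range, ← range_comp]
  exact congrArg Set.range (funext fun v => tropVecMul_tropVecMul v M N)

lemma tropRowSpan_tropMul_subset (D B : Matrix (Fin n) (Fin n) S) :
    tropRowSpan (tropMul D B) ⊆ tropRowSpan B := by
  rintro _ ⟨v, rfl⟩
  exact ⟨tropVecMul v D, (tropVecMul_tropVecMul v D B).symm⟩

end RowSpan

section LinearMaps

variable {S : Type*} [LinearOrder S] [AddCommMonoid S]

def IsTropLinearOn {ι : Type*} (f : (ι → S) → ι → S) (X : Set (ι → S)) : Prop :=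
  (∀ x ∈ X, ∀ y ∈ X, f (x ⊔ y) = f x ⊔ f y) ∧
    ∀ c : S, ∀ x ∈ X, (f fun j => c + x j) = fun j => c + f x j

variable {n : ℕ} {X Y : Set (Fin n → S)}

lemma surjLin_iff :
    SurjLin X Y ↔ ∃ f, IsTropLinearOn f X ∧ MapsTo f X Y ∧ SurjOn f X Y :=
  exists_congr fun _ => and_assoc.symm

lemma injLin_iff : InjLin X Y ↔ ∃ f, IsTropLinearOn f X ∧ MapsTo f X Y ∧ InjOn f X :=
  exists_congr fun _ => and_assoc.symm

lemma surjLin_of_image_eq {f : (Fin n → S) → Fin n → S} (hf : IsTropLinearOn f X)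
    (h : f '' X = Y) : SurjLin X Y :=
  surjLin_iff.2 ⟨f, hf, h ▸ mapsTo_image f X, h ▸ surjOn_image f X⟩

lemma isTropLinearOn_tropVecMul [IsOrderedAddMonoid S] [NeZero n]
    (N : Matrix (Fin n) (Fin n) S) : IsTropLinearOn (fun v => tropVecMul v N) X :=
  ⟨fun x _ y _ => tropVecMul_sup x y N, fun c x _ => tropVecMul_const_add c x N⟩

end LinearMaps

section Residuated

variable {S : Type*} [LinearOrder S] [AddCommMonoid S] {n : ℕ} [NeZero n]

def tropLeftRes (res : S → S → S) (v : Fin n → S) (M : Matrix (Fin n) (Fin n) S) : Fin n → S :=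
  fun i => univ.inf' univ_nonempty fun j => res (v j) (M i j)

variable {res : S → S → S}

lemma le_tropLeftRes_iff (hres : ∀ a b z : S, z + b ≤ a ↔ z ≤ res a b)
    {v w : Fin n → S} {M : Matrix (Fin n) (Fin n) S} :
    w ≤ tropLeftRes res v M ↔ tropVecMul w M ≤ v := by
  simp only [Pi.le_def, tropLeftRes, tropVecMul, le_inf'_iff, sup'_le_iff, Finset.mem_univ,
    true_implies, ← hres]
  exact forall_comm

lemma tropVecMul_tropLeftRes_le (hres : ∀ a b z : S, z + b ≤ a ↔ z ≤ res a b)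
    (v : Fin n → S) (M : Matrix (Fin n) (Fin n) S) : tropVecMul (tropLeftRes res v M) M ≤ v :=
  (le_tropLeftRes_iff hres).1 le_rfl

lemma zero_le_tropLeftRes_row (hres : ∀ a b z : S, z + b ≤ a ↔ z ≤ res a b)
    (M : Matrix (Fin n) (Fin n) S) (i : Fin n) : 0 ≤ tropLeftRes res (M i) M i :=
  le_inf' _ _ fun _ _ => (hres _ _ _).1 (zero_add _).le

variable [IsOrderedAddMonoid S]

lemma mem_tropRowSpan_iff_le (hres : ∀ a b z : S, z + b ≤ a ↔ z ≤ res a b)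
    {v : Fin n → S} {M : Matrix (Fin n) (Fin n) S} :
    v ∈ tropRowSpan M ↔ v ≤ tropVecMul (tropLeftRes res v M) M := by
  constructor
  · rintro ⟨w, rfl⟩
    exact tropVecMul_mono M ((le_tropLeftRes_iff hres).2 le_rfl)
  · exact fun h => ⟨_, le_antisymm h (tropVecMul_tropLeftRes_le hres v M)⟩

lemma row_mem_tropRowSpan (hres : ∀ a b z : S, z + b ≤ a ↔ z ≤ res a b)
    (M : Matrix (Fin n) (Fin n) S) (i : Fin n) : M i ∈ tropRowSpan M := by
  refine (mem_tropRowSpan_iff_le hres).2 fun j => ?_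
  calc M i j = 0 + M i j := (zero_add _).symm
    _ ≤ tropLeftRes res (M i) M i + M i j :=
      add_le_add_left (zero_le_tropLeftRes_row hres M i) _
    _ ≤ _ := le_sup' (fun k => tropLeftRes res (M i) M k + M k j) (mem_univ i)

lemma tropRowSpan_subset_iff (hres : ∀ a b z : S, z + b ≤ a ↔ z ≤ res a b)
    {B C : Matrix (Fin n) (Fin n) S} :
    tropRowSpan C ⊆ tropRowSpan B ↔ ∀ i, C i ∈ tropRowSpan B := by
  refine ⟨fun h i => h (row_mem_tropRowSpan hres C i), fun h => ?_⟩
  obtain ⟨D, rfl⟩ := exists_eq_tropMul_of_forall_mem h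
  exact tropRowSpan_tropMul_subset D B

lemma exists_eq_tropMul_of_tropColSpan_subset (hres : ∀ a b z : S, z + b ≤ a ↔ z ≤ res a b)
    {A C : Matrix (Fin n) (Fin n) S} (h : tropColSpan C ⊆ tropColSpan A) :
    ∃ P, C = tropMul A P := by
  obtain ⟨Q, hQ⟩ := exists_eq_tropMul_of_forall_mem ((tropRowSpan_subset_iff hres).1 h)
  refine ⟨Qᵀ, ?_⟩
  rw [← transpose_transpose C, hQ, transpose_tropMul, transpose_transpose]

lemma map_tropVecMul (hres : ∀ a b z : S, z + b ≤ a ↔ z ≤ res a b)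
    {M : Matrix (Fin n) (Fin n) S} {f : (Fin n → S) → Fin n → S}
    (hf : IsTropLinearOn f (tropRowSpan M)) (v : Fin n → S) :
    f (tropVecMul v M) = tropVecMul v (of fun i => f (M i)) := by
  have hrow (i : Fin n) := row_mem_tropRowSpan hres M i
  have hsum : tropVecMul v M = univ.sup' univ_nonempty fun i j => v i + M i j := by
    funext j
    rw [Finset.sup'_apply]
    rfl
  rw [hsum, map_finset_sup'_of_map_sup (supClosed_tropRowSpan M) hf.1 _
    fun i _ => const_add_mem_tropRowSpan (hrow i) (v i)]
  funext j
  rw [Finset.sup'_apply]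
  exact sup'_congr _ rfl fun i _ => congrFun (hf.2 (v i) (M i) (hrow i)) j

lemma image_eq_tropRowSpan (hres : ∀ a b z : S, z + b ≤ a ↔ z ≤ res a b)
    {M : Matrix (Fin n) (Fin n) S} {f : (Fin n → S) → Fin n → S}
    (hf : IsTropLinearOn f (tropRowSpan M)) :
    f '' tropRowSpan M = tropRowSpan (of fun i => f (M i)) := by
  rw [tropRowSpan_eq_range, tropRowSpan_eq_range, ← range_comp]
  exact congrArg Set.range (funext (map_tropVecMul hres hf))

end Residuated

section Duality

variable {S : Type*} [LinearOrder S] [AddCommMonoid S] [IsOrderedAddMonoid S] [DenselyOrdered S]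
  {n : ℕ} [NeZero n] {res : S → S → S}

-- `hcancel` is the group identity `p - (c - b) = p - c + b`, weakened by `p < s` so that it
-- also holds in `EReal`.
theorem mem_tropRowSpan_of_monotone (hres : ∀ a b z : S, z + b ≤ a ↔ z ≤ res a b)
    (hcancel : ∀ b c p s : S, p < s → res p (res c b) ≤ res s c + b)
    {B : Matrix (Fin n) (Fin n) S} {c : Fin n → S}
    (hc : ∀ v w, tropVecMul v Bᵀ ≤ tropVecMul w Bᵀ → tropDot v c ≤ tropDot w c) :
    c ∈ tropRowSpan B := by
  refine (mem_tropRowSpan_iff_le hres).2 fun i => ?_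
  set d := tropLeftRes res c B
  by_contra! hlt
  obtain ⟨s, hds, hsc⟩ := exists_between hlt
  -- `m` is the largest vector with `B m ≤ Bᵀ i` and `μ` the largest with `⟪μ, c⟫ ≤ s`;
  -- then `B m ≤ B μ`, yet `c i ≤ ⟪m, c⟫` and `s < c i`.
  set m := tropLeftRes res (Bᵀ i) Bᵀ
  set μ : Fin n → S := fun l => res s (c l)
  have hcol : Bᵀ i ≤ tropVecMul μ Bᵀ := by
    intro k
    obtain ⟨l, -, hl⟩ := exists_mem_eq_inf' univ_nonempty fun l => res (c l) (B k l)
    have hdk : B k i + d k ≤ tropVecMul d B i := by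
      rw [add_comm]
      exact le_sup' (fun k => d k + B k i) (mem_univ k)
    calc B k i ≤ res (tropVecMul d B i) (d k) := (hres _ _ _).1 hdk
      _ ≤ res s (c l) + B k l := by
        rw [show d k = res (c l) (B k l) from hl]
        exact hcancel _ _ _ _ hds
      _ ≤ tropVecMul μ Bᵀ k := le_sup' (fun l => μ l + Bᵀ l k) (mem_univ l)
  have hμ : tropDot μ c ≤ s := sup'_le _ _ fun l _ => (hres _ _ _).2 le_rfl
  have hm : c i ≤ tropDot m c :=
    calc c i = 0 + c i := (zero_add _).symm
      _ ≤ m i + c i := add_le_add_left (zero_le_tropLeftRes_row hres Bᵀ i) _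
      _ ≤ tropDot m c := le_sup' (fun l => m l + c l) (mem_univ i)
  have hmμ := hc m μ ((tropVecMul_tropLeftRes_le hres _ _).trans hcol)
  exact hsc.not_ge (hm.trans (hmμ.trans hμ))

theorem tropRowSpan_subset_of_monotone (hres : ∀ a b z : S, z + b ≤ a ↔ z ≤ res a b)
    (hcancel : ∀ b c p s : S, p < s → res p (res c b) ≤ res s c + b)
    {B C : Matrix (Fin n) (Fin n) S}
    (h : ∀ v w, tropVecMul v Bᵀ ≤ tropVecMul w Bᵀ → tropVecMul v Cᵀ ≤ tropVecMul w Cᵀ) :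
    tropRowSpan C ⊆ tropRowSpan B :=
  (tropRowSpan_subset_iff hres).2 fun k =>
    mem_tropRowSpan_of_monotone hres hcancel fun v w hvw => h v w hvw k

end Duality

section Equivalence

variable {S : Type*} [LinearOrder S] [AddCommMonoid S] [IsOrderedAddMonoid S]
  {n : ℕ} [NeZero n] {res : S → S → S}

theorem surjLin_of_tropColSpan_eq (hres : ∀ a b z : S, z + b ≤ a ↔ z ≤ res a b)
    {A B C : Matrix (Fin n) (Fin n) S} (hCA : tropColSpan C = tropColSpan A)
    (hCB : tropRowSpan C ⊆ tropRowSpan B) : SurjLin (tropColSpan B) (tropColSpan A) := by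
  obtain ⟨D, rfl⟩ := exists_eq_tropMul_of_forall_mem ((tropRowSpan_subset_iff hres).1 hCB)
  refine surjLin_of_image_eq (isTropLinearOn_tropVecMul Dᵀ) ?_
  rw [← hCA]
  exact (image_tropVecMul_tropRowSpan Bᵀ Dᵀ).trans
    (congrArg tropRowSpan (transpose_tropMul D B).symm)

theorem injLin_of_tropColSpan_eq (hres : ∀ a b z : S, z + b ≤ a ↔ z ≤ res a b)
    {A B C : Matrix (Fin n) (Fin n) S} (hCA : tropColSpan C = tropColSpan A)
    (hCB : tropRowSpan C ⊆ tropRowSpan B) : InjLin (tropRowSpan A) (tropRowSpan B) := by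
  obtain ⟨P, hP⟩ := exists_eq_tropMul_of_tropColSpan_subset hres hCA.subset
  obtain ⟨Q, hQ⟩ := exists_eq_tropMul_of_tropColSpan_subset hres hCA.symm.subset
  refine injLin_iff.2 ⟨fun v => tropVecMul v P, isTropLinearOn_tropVecMul P, ?_, ?_⟩
  · rw [hP] at hCB
    exact mapsTo_iff_image_subset.2 ((image_tropVecMul_tropRowSpan A P).trans_subset hCB)
  · refine LeftInvOn.injOn (f₁' := fun v => tropVecMul v Q) ?_
    rintro _ ⟨v, rfl⟩
    change tropVecMul (tropVecMul (tropVecMul v A) P) Q = tropVecMul v A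
    rw [tropVecMul_tropVecMul, tropVecMul_tropVecMul, ← tropMul_assoc, ← hP, ← hQ]

variable [DenselyOrdered S]

theorem exists_tropColSpan_eq_of_surjLin (hres : ∀ a b z : S, z + b ≤ a ↔ z ≤ res a b)
    (hcancel : ∀ b c p s : S, p < s → res p (res c b) ≤ res s c + b)
    {A B : Matrix (Fin n) (Fin n) S} (h : SurjLin (tropColSpan B) (tropColSpan A)) :
    ∃ C, tropColSpan C = tropColSpan A ∧ tropRowSpan C ⊆ tropRowSpan B := by
  obtain ⟨f, hf, hmaps, hsurj⟩ := surjLin_iff.1 h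
  have himage : f '' tropColSpan B = tropColSpan A := hmaps.image_subset.antisymm hsurj
  refine ⟨(of fun l => f (Bᵀ l))ᵀ, ?_, ?_⟩
  · rw [← himage]
    exact (image_eq_tropRowSpan hres hf).symm
  · refine tropRowSpan_subset_of_monotone hres hcancel fun v w hvw => ?_
    rw [transpose_transpose, ← map_tropVecMul hres hf, ← map_tropVecMul hres hf]
    exact monotoneOn_of_map_sup hf.1 (tropVecMul_mem_tropRowSpan v _)
      (tropVecMul_mem_tropRowSpan w _) hvw

theorem exists_tropColSpan_eq_of_injLin (hres : ∀ a b z : S, z + b ≤ a ↔ z ≤ res a b)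
    (hcancel : ∀ b c p s : S, p < s → res p (res c b) ≤ res s c + b)
    {A B : Matrix (Fin n) (Fin n) S} (h : InjLin (tropRowSpan A) (tropRowSpan B)) :
    ∃ C, tropColSpan C = tropColSpan A ∧ tropRowSpan C ⊆ tropRowSpan B := by
  obtain ⟨g, hg, hmaps, hinj⟩ := injLin_iff.1 h
  have hgA := map_tropVecMul hres hg
  have hmem (v : Fin n → S) := tropVecMul_mem_tropRowSpan v A
  refine ⟨of fun i => g (A i), Subset.antisymm ?_ ?_, ?_⟩
  · refine tropRowSpan_subset_of_monotone hres hcancel fun v w hvw => ?_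
    simp only [transpose_transpose] at hvw ⊢
    rw [← hgA, ← hgA]
    exact monotoneOn_of_map_sup hg.1 (hmem v) (hmem w) hvw
  · refine tropRowSpan_subset_of_monotone hres hcancel fun v w hvw => ?_
    simp only [transpose_transpose] at hvw ⊢
    rw [← hgA, ← hgA] at hvw
    exact le_of_map_sup_le (supClosed_tropRowSpan A) hg.1 hinj (hmem v) (hmem w) hvw
  · rw [← image_eq_tropRowSpan hres hg]
    exact hmaps.image_subset

theorem surjEmbedTFAE_of_residuated (res : S → S → S)
    (hres : ∀ a b z : S, z + b ≤ a ↔ z ≤ res a b)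
    (hcancel : ∀ b c p s : S, p < s → res p (res c b) ≤ res s c + b) : SurjEmbedTFAE S n := by
  intro A B
  have hiii_i : (∃ C, tropColSpan C = tropColSpan A ∧ tropRowSpan C ⊆ tropRowSpan B) →
      SurjLin (tropColSpan B) (tropColSpan A) := fun ⟨_, hCA, hCB⟩ =>
    surjLin_of_tropColSpan_eq hres hCA hCB
  refine ⟨⟨fun h => ?_, fun h => hiii_i (exists_tropColSpan_eq_of_injLin hres hcancel h)⟩,
    exists_tropColSpan_eq_of_surjLin hres hcancel, hiii_i⟩
  obtain ⟨C, hCA, hCB⟩ := exists_tropColSpan_eq_of_surjLin hres hcancel h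
  exact injLin_of_tropColSpan_eq hres hCA hCB

end Equivalence

-- With Mathlib's convention `⊥ + ⊤ = ⊥`, `a - b` is the residual of `a` by `b` except when
-- `a = b = ⊥` or `a = b = ⊤`; `-(b - a)` is the residual in all cases.
lemma EReal.add_le_iff_le_neg_sub (a b z : EReal) : z + b ≤ a ↔ z ≤ -(b - a) := by
  induction a <;> induction b <;> induction z <;> norm_cast <;>
    simp [-EReal.coe_sub, _root_.le_sub_iff_add_le]

lemma EReal.neg_sub_neg_sub_le_neg_sub_add (b c p s : EReal) (h : p < s) :
    -(-(b - c) - p) ≤ -(c - s) + b := by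
  induction b <;> induction c <;> induction p <;> induction s <;> norm_cast at * <;>
    simp [-EReal.coe_sub] at *
  exact h.le

/-- For `S ∈ {FT, T̄}` (formalised as `ℝ` and `EReal` with tropical operations),
linear surjectivity of column spaces, linear embeddability of row spaces, and
the existence of `C` with `A R C ≤_L B` are equivalent. -/
theorem stmt10 (n : ℕ) [NeZero n] : SurjEmbedTFAE ℝ n ∧ SurjEmbedTFAE EReal n :=
  ⟨surjEmbedTFAE_of_residuated (fun a b => a - b) (fun _ _ _ => le_sub_iff_add_le.symm)
      fun _ _ _ _ h => by linarith,
    surjEmbedTFAE_of_residuated (fun a b => -(b - a)) EReal.add_le_iff_le_neg_sub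
      EReal.neg_sub_neg_sub_le_neg_sub_add⟩
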